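/- arXiv:1602.05084 — 2 statements merged into one kernel-verified Lean document; each statement's English description precedes it below -/
import Mathlib

section
/- Let g₀(t) := (√2/π)·sin(πt) for t ∈ [0,1], and let R₀(s,t) := min(s,t) − g₀(s)g₀(t). If λ > 0 is an eigenvalue of the integral operator A_{R₀} with continuous eigenfunction e, then there exists a constant C ∈ ℝ such that e(t) = C·[ sin(t/√λ) + √λ·π·cos(1/√λ)·sin(πt) ] for all t ∈ [0,1]; equivalently, e(t) = C·[ sin(t/√λ) − (2 sin(1/√λ)/(λπ(π² − 1/λ)))·sin(πt) ] for all t ∈ [0,1]. -/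
open Real Set intervalIntegral

/-- `g₀(t) = (√2/π) sin(π t)`. -/
noncomputable def gZero (t : ℝ) : ℝ := Real.sqrt 2 / Real.pi * Real.sin (Real.pi * t)

/-- `R₀(s,t) = min(s,t) - g₀(s) g₀(t)`. -/
noncomputable def RZero (s t : ℝ) : ℝ := min s t - gZero s * gZero t

/-!
Put `a = ∫ g₀ e`. Since `∫₀¹ min(t,s) e(s) ds = ∫₀ᵗ s e(s) ds + t ∫ₜ¹ e(s) ds`, the eigenvalue
equation makes `e` twice differentiable, with `λ e'' + e = a π² g₀`, `e 0 = 0` and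
`λ e' 1 = a √2`. For `k = 1/√λ ≠ π` this forces `e = C sin (k t) + c sin (π t)`; the boundary
condition at `1` determines `c` as in the first formula, the identity `a = ∫ g₀ e` as in the
second. For `k = π` the forcing is resonant, and the same two conditions force `e = 0`.
-/

theorem hasDerivAt_sin_mul (k x : ℝ) :
    HasDerivAt (fun u => sin (k * u)) (k * cos (k * x)) x := by
  simpa [mul_comm] using ((hasDerivAt_id x).const_mul k).sin

theorem hasDerivAt_cos_mul (k x : ℝ) :
    HasDerivAt (fun u => cos (k * u)) (-(k * sin (k * x))) x := by
  simpa [mul_comm] using ((hasDerivAt_id x).const_mul k).cos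

theorem hasDerivAt_gZero (t : ℝ) : HasDerivAt gZero (√2 * cos (π * t)) t :=
  ((hasDerivAt_sin_mul π t).const_mul (√2 / π)).congr_deriv (by field_simp)

theorem integral_min_mul {f : ℝ → ℝ} (hf : Continuous f) {a b t : ℝ} (hat : a ≤ t) (htb : t ≤ b) :
    ∫ s in a..b, min t s * f s = (∫ s in a..t, s * f s) + t * ∫ s in t..b, f s := by
  have hintegrable : ∀ c d, IntervalIntegrable (fun s => min t s * f s) MeasureTheory.volume c d :=
    fun c d => (by fun_prop : Continuous fun s => min t s * f s).intervalIntegrable c d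
  rw [← integral_add_adjacent_intervals (hintegrable a t) (hintegrable t b),
    ← integral_const_mul]
  congr 1
  · refine integral_congr fun s hs => ?_
    rw [uIcc_of_le hat] at hs
    simp only [min_eq_right hs.2]
  · refine integral_congr fun s hs => ?_
    rw [uIcc_of_le htb] at hs
    simp only [min_eq_left hs.1]

theorem hasDerivAt_integral_mul_add_mul_integral {f : ℝ → ℝ} (hf : Continuous f) (a b t : ℝ) :
    HasDerivAt (fun u => (∫ s in a..u, s * f s) + u * ∫ s in u..b, f s) (∫ s in t..b, f s) t := by
  have hleft : HasDerivAt (fun u => ∫ s in u..b, f s) (-f t) t :=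
    integral_hasDerivAt_left (hf.intervalIntegrable _ _) (hf.stronglyMeasurableAtFilter _ _)
      hf.continuousAt
  exact (((continuous_id.mul hf).integral_hasStrictDerivAt a t).hasDerivAt.add
    ((hasDerivAt_id t).mul hleft)).congr_deriv (by simp only [id, Pi.mul_apply]; ring)

theorem integral_RZero_mul {f : ℝ → ℝ} (hf : Continuous f) {t : ℝ} (ht : t ∈ Icc (0:ℝ) 1) :
    ∫ s in (0:ℝ)..1, RZero t s * f s
      = (∫ s in (0:ℝ)..t, s * f s) + t * (∫ s in t..1, f s)
        - gZero t * ∫ s in (0:ℝ)..1, gZero s * f s := by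
  have hg : Continuous gZero := by unfold gZero; fun_prop
  simp only [RZero, sub_mul, mul_assoc]
  rw [integral_sub ((by fun_prop : Continuous fun s => min t s * f s).intervalIntegrable _ _)
    ((by fun_prop : Continuous fun s => gZero t * (gZero s * f s)).intervalIntegrable _ _),
    integral_const_mul, integral_min_mul hf ht.1 ht.2]

theorem exists_bvp_of_integral_RZero_mul_eq {lam : ℝ} (hlam : 0 < lam) {f : ℝ → ℝ}
    (hf : Continuous f)
    (heig : ∀ t ∈ Icc (0:ℝ) 1, ∫ s in (0:ℝ)..1, RZero t s * f s = lam * f t) :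
    ∃ (E E' : ℝ → ℝ) (a : ℝ), EqOn E f (Icc 0 1) ∧ (∀ t ∈ Icc (0:ℝ) 1, HasDerivAt E (E' t) t) ∧
      (∀ t ∈ Icc (0:ℝ) 1, HasDerivAt E' (lam⁻¹ * (a * √2 * π * sin (π * t) - E t)) t) ∧
      E 0 = 0 ∧ E' 1 = lam⁻¹ * (a * √2) ∧ ∫ s in (0:ℝ)..1, gZero s * E s = a := by
  set a := ∫ s in (0:ℝ)..1, gZero s * f s
  set E := fun t => lam⁻¹ * ((∫ s in (0:ℝ)..t, s * f s) + t * (∫ s in t..1, f s) - a * gZero t)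
  have hEf : EqOn E f (Icc 0 1) := fun t ht => by
    have h := heig t ht
    rw [integral_RZero_mul hf ht] at h
    change _ - gZero t * a = _ at h
    simp only [E, mul_comm a, h]
    field_simp
  refine ⟨E, fun t => lam⁻¹ * ((∫ s in t..1, f s) - a * (√2 * cos (π * t))), a, hEf,
    fun t _ => ((hasDerivAt_integral_mul_add_mul_integral hf 0 1 t).sub
      ((hasDerivAt_gZero t).const_mul a)).const_mul lam⁻¹, fun t ht => ?_, by simp [E, gZero],
    by simp, integral_congr fun s hs => by rw [hEf (by rwa [uIcc_of_le zero_le_one] at hs)]⟩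
  have hleft : HasDerivAt (fun u => ∫ s in u..1, f s) (-f t) t :=
    integral_hasDerivAt_left (hf.intervalIntegrable _ _) (hf.stronglyMeasurableAtFilter _ _)
      hf.continuousAt
  exact ((hleft.sub (((hasDerivAt_cos_mul π t).const_mul √2).const_mul a)).const_mul
    lam⁻¹).congr_deriv (by rw [hEf ht]; ring)

/-- The Wronskians of `w` with `sin (k t)` and with `cos (k t)` are constant. -/
theorem eq_sin_of_hasDerivAt_of_hasDerivAt_neg_sq_mul {k T : ℝ} (hk : k ≠ 0) {w w' : ℝ → ℝ}
    (hw : ∀ t ∈ Icc 0 T, HasDerivAt w (w' t) t)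
    (hw' : ∀ t ∈ Icc 0 T, HasDerivAt w' (-(k ^ 2) * w t) t) (hw0 : w 0 = 0) :
    ∀ t ∈ Icc 0 T, w t = w' 0 / k * sin (k * t) ∧ w' t = w' 0 * cos (k * t) := by
  set W₁ : ℝ → ℝ := fun t => w' t * sin (k * t) - k * w t * cos (k * t)
  set W₂ : ℝ → ℝ := fun t => w' t * cos (k * t) + k * w t * sin (k * t)
  have hW₁ : ∀ t ∈ Icc 0 T, HasDerivAt W₁ 0 t := fun t ht =>
    (((hw' t ht).mul (hasDerivAt_sin_mul k t)).sub
      (((hw t ht).const_mul k).mul (hasDerivAt_cos_mul k t))).congr_deriv (by ring)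
  have hW₂ : ∀ t ∈ Icc 0 T, HasDerivAt W₂ 0 t := fun t ht =>
    (((hw' t ht).mul (hasDerivAt_cos_mul k t)).add
      (((hw t ht).const_mul k).mul (hasDerivAt_sin_mul k t))).congr_deriv (by ring)
  have hconst : ∀ {W : ℝ → ℝ}, (∀ t ∈ Icc 0 T, HasDerivAt W 0 t) → ∀ t ∈ Icc 0 T, W t = W 0 :=
    fun hW => constant_of_has_deriv_right_zero
      (fun t ht => (hW t ht).continuousAt.continuousWithinAt)
      (fun t ht => (hW t (Ico_subset_Icc_self ht)).hasDerivWithinAt)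
  intro t ht
  have h₁ : W₁ t = 0 := by simpa [W₁, hw0] using hconst hW₁ t ht
  have h₂ : W₂ t = w' 0 := by simpa [W₂, hw0] using hconst hW₂ t ht
  have hpyth := sin_sq_add_cos_sq (k * t)
  constructor
  · field_simp
    linear_combination sin (k * t) * h₂ - cos (k * t) * h₁ - k * w t * hpyth
  · linear_combination sin (k * t) * h₁ + cos (k * t) * h₂ - w' t * hpyth

theorem integral_sin_pi_mul_sq : ∫ s in (0:ℝ)..1, sin (π * s) ^ 2 = 1 / 2 := by
  rw [integral_comp_mul_left (fun x => sin x ^ 2) pi_ne_zero, integral_sin_sq]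
  simp [field]

theorem integral_sin_pi_mul_mul_sin_mul {k : ℝ} (hk : π ^ 2 - k ^ 2 ≠ 0) :
    ∫ s in (0:ℝ)..1, sin (π * s) * sin (k * s) = π * sin k / (π ^ 2 - k ^ 2) := by
  have hderiv : ∀ s ∈ uIcc (0:ℝ) 1, HasDerivAt
      (fun u => (k * sin (π * u) * cos (k * u) - π * cos (π * u) * sin (k * u)) / (π ^ 2 - k ^ 2))
      (sin (π * s) * sin (k * s)) s := fun s _ =>
    (((((hasDerivAt_sin_mul π s).const_mul k).mul (hasDerivAt_cos_mul k s)).sub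
      (((hasDerivAt_cos_mul π s).const_mul π).mul (hasDerivAt_sin_mul k s))).div_const
      (π ^ 2 - k ^ 2)).congr_deriv (by field_simp; ring)
  rw [integral_eq_sub_of_hasDerivAt hderiv (Continuous.intervalIntegrable (by fun_prop) _ _)]
  simp

theorem integral_mul_sin_pi_mul_mul_cos_pi_mul :
    ∫ s in (0:ℝ)..1, s * (sin (π * s) * cos (π * s)) = -1 / (4 * π) := by
  have hderiv : ∀ s ∈ uIcc (0:ℝ) 1, HasDerivAt
      (fun u => -(u * cos (2 * π * u)) / (4 * π) + sin (2 * π * u) / (8 * π ^ 2))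
      (s * (sin (π * s) * cos (π * s))) s := by
    intro s _
    refine (((((hasDerivAt_id s).mul (hasDerivAt_cos_mul (2 * π) s)).neg).div_const (4 * π)).add
      ((hasDerivAt_sin_mul (2 * π) s).div_const (8 * π ^ 2))).congr_deriv ?_
    rw [mul_assoc 2 π s, sin_two_mul]
    field_simp
    simp only [id]
    ring
  rw [integral_eq_sub_of_hasDerivAt hderiv (Continuous.intervalIntegrable (by fun_prop) _ _)]
  simp

theorem integral_gZero_mul_sin_add {k C c : ℝ} (hk : π ^ 2 - k ^ 2 ≠ 0) :
    ∫ s in (0:ℝ)..1, gZero s * (C * sin (k * s) + c * sin (π * s))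
      = √2 / π * (C * (π * sin k / (π ^ 2 - k ^ 2)) + c / 2) := by
  have hsplit : ∀ s, gZero s * (C * sin (k * s) + c * sin (π * s))
      = √2 / π * C * (sin (π * s) * sin (k * s)) + √2 / π * c * sin (π * s) ^ 2 := fun s => by
    simp only [gZero]; ring
  simp only [hsplit]
  rw [integral_add (Continuous.intervalIntegrable (by fun_prop) _ _)
    (Continuous.intervalIntegrable (by fun_prop) _ _), integral_const_mul, integral_const_mul,
    integral_sin_pi_mul_mul_sin_mul hk, integral_sin_pi_mul_sq]
  ring

theorem integral_gZero_mul_sin_add_mul_cos {B d : ℝ} :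
    ∫ s in (0:ℝ)..1, gZero s * (B * sin (π * s) + d * (s * cos (π * s)))
      = √2 / π * (B / 2 - d / (4 * π)) := by
  have hsplit : ∀ s, gZero s * (B * sin (π * s) + d * (s * cos (π * s)))
      = √2 / π * B * sin (π * s) ^ 2 + √2 / π * d * (s * (sin (π * s) * cos (π * s))) :=
    fun s => by simp only [gZero]; ring
  simp only [hsplit]
  rw [integral_add (Continuous.intervalIntegrable (by fun_prop) _ _)
    (Continuous.intervalIntegrable (by fun_prop) _ _), integral_const_mul, integral_const_mul,
    integral_sin_pi_mul_sq, integral_mul_sin_pi_mul_mul_cos_pi_mul]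
  ring

theorem exists_eq_add_sin_of_hasDerivAt {k T : ℝ} (hk : k ≠ 0) {E E' p p' F : ℝ → ℝ}
    (hE : ∀ t ∈ Icc 0 T, HasDerivAt E (E' t) t)
    (hE' : ∀ t ∈ Icc 0 T, HasDerivAt E' (-(k ^ 2) * E t + F t) t)
    (hp : ∀ t ∈ Icc 0 T, HasDerivAt p (p' t) t)
    (hp' : ∀ t ∈ Icc 0 T, HasDerivAt p' (-(k ^ 2) * p t + F t) t) (h0 : E 0 = p 0) :
    ∃ C : ℝ, ∀ t ∈ Icc 0 T, E t = p t + C * sin (k * t) ∧ E' t = p' t + C * k * cos (k * t) := by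
  have hsol := eq_sin_of_hasDerivAt_of_hasDerivAt_neg_sq_mul hk (w := fun t => E t - p t)
    (fun t ht => (hE t ht).sub (hp t ht))
    (fun t ht => ((hE' t ht).sub (hp' t ht)).congr_deriv (by ring)) (sub_eq_zero.2 h0)
  refine ⟨(E' 0 - p' 0) / k, fun t ht => ⟨?_, ?_⟩⟩
  · linarith [(hsol t ht).1]
  · rw [div_mul_cancel₀ _ hk]
    linarith [(hsol t ht).2]

theorem exists_eq_of_resonant_ode {a : ℝ} {E E' : ℝ → ℝ}
    (hE : ∀ t ∈ Icc (0:ℝ) 1, HasDerivAt E (E' t) t)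
    (hE' : ∀ t ∈ Icc (0:ℝ) 1, HasDerivAt E' (π ^ 2 * (a * √2 * π * sin (π * t) - E t)) t)
    (hE0 : E 0 = 0) :
    ∃ d C : ℝ, 2 * d = -(a * √2 * π ^ 2) ∧ ∀ t ∈ Icc (0:ℝ) 1,
      E t = d * (t * cos (π * t)) + C * sin (π * t) ∧
      E' t = d * (cos (π * t) - π * (t * sin (π * t))) + C * π * cos (π * t) := by
  obtain ⟨d, hd⟩ : ∃ d : ℝ, 2 * d = -(a * √2 * π ^ 2) := ⟨_, mul_div_cancel₀ _ two_ne_zero⟩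
  exact ⟨d, exists_eq_add_sin_of_hasDerivAt pi_ne_zero hE
    (F := fun t => π ^ 2 * (a * √2 * π * sin (π * t)))
    (p := fun t => d * (t * cos (π * t)))
    (p' := fun t => d * (cos (π * t) - π * (t * sin (π * t))))
    (fun t ht => (hE' t ht).congr_deriv (by ring))
    (fun t _ => (((hasDerivAt_id t).mul (hasDerivAt_cos_mul π t)).const_mul d).congr_deriv
      (by simp only [id]; ring))
    (fun t _ => (((hasDerivAt_cos_mul π t).sub
      (((hasDerivAt_id t).mul (hasDerivAt_sin_mul π t)).const_mul π)).const_mul d).congr_deriv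
      (by simp only [id]; linear_combination -π * sin (π * t) * hd))
    (by simp [hE0]) |>.imp fun _ h => ⟨hd, h⟩⟩

theorem eqOn_zero_of_resonant_bvp {a : ℝ} {E E' : ℝ → ℝ}
    (hE : ∀ t ∈ Icc (0:ℝ) 1, HasDerivAt E (E' t) t)
    (hE' : ∀ t ∈ Icc (0:ℝ) 1, HasDerivAt E' (π ^ 2 * (a * √2 * π * sin (π * t) - E t)) t)
    (hE0 : E 0 = 0) (hE'1 : E' 1 = π ^ 2 * (a * √2))
    (ha : ∫ s in (0:ℝ)..1, gZero s * E s = a) :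
    EqOn E 0 (Icc 0 1) := by
  obtain ⟨d, C, hd, hsol⟩ := exists_eq_of_resonant_ode hE hE' hE0
  have hbdry : -d - C * π = π ^ 2 * (a * √2) := by
    have h := (hsol 1 (right_mem_Icc.2 zero_le_one)).2
    simp only [hE'1, mul_one, cos_pi, sin_pi, mul_zero, sub_zero] at h
    linarith
  have hint : √2 / π * (C / 2 - d / (4 * π)) = a := by
    rw [← integral_gZero_mul_sin_add_mul_cos, ← ha]
    refine integral_congr fun s hs => ?_
    rw [(hsol s (by rwa [uIcc_of_le zero_le_one] at hs)).1, add_comm]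
  have hsq2 : √2 * √2 = 2 := mul_self_sqrt zero_le_two
  have ha0 : a = 0 := by
    have h10 : 10 * π ^ 2 * a = 0 := by
      field_simp at hint
      linear_combination -hint - 4 * √2 * hbdry - π ^ 2 * a * hsq2 - 3 * √2 * hd
    simpa [pi_ne_zero] using h10
  have hd0 : d = 0 := by simpa [ha0] using hd
  have hC0 : C = 0 := by simpa [ha0, hd0, pi_ne_zero] using hbdry
  intro t ht
  simp [(hsol t ht).1, hC0, hd0]

theorem exists_eq_of_nonresonant_ode {k a : ℝ} (hk : k ≠ 0) (hkπ : k ^ 2 - π ^ 2 ≠ 0)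
    {E E' : ℝ → ℝ} (hE : ∀ t ∈ Icc (0:ℝ) 1, HasDerivAt E (E' t) t)
    (hE' : ∀ t ∈ Icc (0:ℝ) 1, HasDerivAt E' (k ^ 2 * (a * √2 * π * sin (π * t) - E t)) t)
    (hE0 : E 0 = 0) :
    ∃ c C : ℝ, c * (k ^ 2 - π ^ 2) = a * √2 * π * k ^ 2 ∧ ∀ t ∈ Icc (0:ℝ) 1,
      E t = c * sin (π * t) + C * sin (k * t) ∧
      E' t = c * (π * cos (π * t)) + C * k * cos (k * t) := by
  obtain ⟨c, hc⟩ : ∃ c : ℝ, c * (k ^ 2 - π ^ 2) = a * √2 * π * k ^ 2 :=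
    ⟨_, div_mul_cancel₀ _ hkπ⟩
  exact ⟨c, exists_eq_add_sin_of_hasDerivAt hk hE
    (F := fun t => k ^ 2 * (a * √2 * π * sin (π * t)))
    (p := fun t => c * sin (π * t)) (p' := fun t => c * (π * cos (π * t)))
    (fun t ht => (hE' t ht).congr_deriv (by ring))
    (fun t _ => (hasDerivAt_sin_mul π t).const_mul c)
    (fun t _ => ((hasDerivAt_cos_mul π t).const_mul π |>.const_mul c).congr_deriv
      (by linear_combination sin (π * t) * hc))
    (by simp [hE0]) |>.imp fun _ h => ⟨hc, h⟩⟩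

theorem exists_eq_of_nonresonant_bvp {k a : ℝ} (hk : 0 < k) (hkπ : k ≠ π) {E E' : ℝ → ℝ}
    (hE : ∀ t ∈ Icc (0:ℝ) 1, HasDerivAt E (E' t) t)
    (hE' : ∀ t ∈ Icc (0:ℝ) 1, HasDerivAt E' (k ^ 2 * (a * √2 * π * sin (π * t) - E t)) t)
    (hE0 : E 0 = 0) (hE'1 : E' 1 = k ^ 2 * (a * √2))
    (ha : ∫ s in (0:ℝ)..1, gZero s * E s = a) :
    ∃ C : ℝ, ∀ t ∈ Icc (0:ℝ) 1,
      E t = C * (sin (k * t) + π / k * cos k * sin (π * t)) ∧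
      E t = C * (sin (k * t) - 2 * k ^ 2 * sin k / (π * (π ^ 2 - k ^ 2)) * sin (π * t)) := by
  have hk2 : π ^ 2 - k ^ 2 ≠ 0 := by
    rw [sub_ne_zero]
    exact fun h => hkπ ((pow_left_inj₀ pi_pos.le hk.le two_ne_zero).1 h).symm
  obtain ⟨c, C, hc, hsol⟩ :=
    exists_eq_of_nonresonant_ode hk.ne' (fun h => hk2 (by linear_combination -h)) hE hE' hE0
  have hbdry : C * k * cos k - c * π = k ^ 2 * (a * √2) := by
    have h := (hsol 1 (right_mem_Icc.2 zero_le_one)).2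
    simp only [hE'1, mul_one, cos_pi] at h
    linarith
  have hint : √2 / π * (C * (π * sin k / (π ^ 2 - k ^ 2)) + c / 2) = a := by
    rw [← integral_gZero_mul_sin_add hk2, ← ha]
    refine integral_congr fun s hs => ?_
    rw [(hsol s (by rwa [uIcc_of_le zero_le_one] at hs)).1, add_comm]
  have hsq2 : √2 * √2 = 2 := mul_self_sqrt zero_le_two
  have hc₁ : c = π * C * cos k / k := by
    rw [eq_div_iff hk.ne']
    have h : k * (c * k - π * C * cos k) = 0 := by linear_combination hc - π * hbdry
    exact sub_eq_zero.1 ((mul_eq_zero.1 h).resolve_left hk.ne')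
  have hc₂ : c = -(2 * k ^ 2 * C * sin k) / (π * (π ^ 2 - k ^ 2)) := by
    rw [eq_div_iff (mul_ne_zero pi_ne_zero hk2)]
    have h : 2 * π * (c * (π * (π ^ 2 - k ^ 2)) + 2 * k ^ 2 * C * sin k) = 0 := by
      field_simp at hint
      linear_combination k ^ 2 * √2 * hint
        - k ^ 2 * (2 * π * C * sin k + (π ^ 2 - k ^ 2) * c) * hsq2 - 2 * (π ^ 2 - k ^ 2) * hc
    linarith [(mul_eq_zero.1 h).resolve_left (by positivity)]
  refine ⟨C, fun t ht => ⟨?_, ?_⟩⟩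
  · rw [(hsol t ht).1, hc₁]; ring
  · rw [(hsol t ht).1, hc₂]; ring

theorem stmt7_general (lam : ℝ) (hlam : 0 < lam) (e : ℝ → ℝ)
    (he_cont : ContinuousOn e (Set.Icc 0 1))
    (heig : ∀ t ∈ Set.Icc (0:ℝ) 1,
      (∫ s in (0:ℝ)..1, RZero t s * e s) = lam * e t) :
    ∃ C : ℝ,
      (∀ t ∈ Set.Icc (0:ℝ) 1,
        e t = C * (Real.sin (t / Real.sqrt lam)
          + Real.sqrt lam * Real.pi * Real.cos (1 / Real.sqrt lam)
              * Real.sin (Real.pi * t))) ∧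
      (∀ t ∈ Set.Icc (0:ℝ) 1,
        e t = C * (Real.sin (t / Real.sqrt lam)
          - 2 * Real.sin (1 / Real.sqrt lam)
              / (lam * Real.pi * (Real.pi ^ 2 - 1 / lam)) * Real.sin (Real.pi * t))) := by
  obtain ⟨f, hf, hfe⟩ : ∃ f : ℝ → ℝ, Continuous f ∧ EqOn f e (Icc 0 1) :=
    ⟨IccExtend zero_le_one ((Icc 0 1).domRestrict e),
      continuous_IccExtend_iff.2 (continuousOn_iff_continuous_domRestrict.1 he_cont),
      fun t ht => IccExtend_of_mem zero_le_one _ ht⟩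
  have heig_f : ∀ t ∈ Icc (0:ℝ) 1, ∫ s in (0:ℝ)..1, RZero t s * f s = lam * f t := fun t ht => by
    rw [hfe ht, ← heig t ht]
    exact integral_congr fun s hs => by rw [hfe (by rwa [uIcc_of_le zero_le_one] at hs)]
  obtain ⟨E, E', a, hEf, hE, hE', hE0, hE'1, ha⟩ :=
    exists_bvp_of_integral_RZero_mul_eq hlam hf heig_f
  have hEe : EqOn E e (Icc 0 1) := hEf.trans hfe
  obtain ⟨k, hk, rfl⟩ : ∃ k : ℝ, 0 < k ∧ lam = (k ^ 2)⁻¹ :=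
    ⟨(√lam)⁻¹, by positivity, by rw [inv_pow, sq_sqrt hlam.le, inv_inv]⟩
  simp only [inv_inv] at hE' hE'1
  simp only [sqrt_inv, sqrt_sq hk.le, div_inv_eq_mul, one_mul, mul_one, mul_comm _ k]
  by_cases hkπ : k = π
  · subst hkπ
    have hE_zero := eqOn_zero_of_resonant_bvp hE hE' hE0 hE'1 ha
    refine ⟨0, fun t ht => ?_, fun t ht => ?_⟩ <;> simp [← hEe ht, hE_zero ht]
  · obtain ⟨C, hC⟩ := exists_eq_of_nonresonant_bvp hk hkπ hE hE' hE0 hE'1 ha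
    refine ⟨C, fun t ht => ?_, fun t ht => ?_⟩
    · rw [← hEe ht, (hC t ht).1]
      ring
    · rw [← hEe ht, (hC t ht).2]
      field_simp

/-- If `λ > 0` is an eigenvalue of the integral operator with kernel `R₀` with continuous
eigenfunction `e`, then `e(t) = C (sin(t/√λ) + √λ π cos(1/√λ) sin(π t))`, equivalently
`e(t) = C (sin(t/√λ) - (2 sin(1/√λ) / (λπ(π² - 1/λ))) sin(π t))`, for some constant `C`. -/
theorem stmt7 (lam : ℝ) (hlam : 0 < lam) (e : ℝ → ℝ)
    (he_cont : ContinuousOn e (Set.Icc 0 1))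
    (he_ne : ∃ t ∈ Set.Icc (0:ℝ) 1, e t ≠ 0)
    (heig : ∀ t ∈ Set.Icc (0:ℝ) 1,
      (∫ s in (0:ℝ)..1, RZero t s * e s) = lam * e t) :
    ∃ C : ℝ,
      (∀ t ∈ Set.Icc (0:ℝ) 1,
        e t = C * (Real.sin (t / Real.sqrt lam)
          + Real.sqrt lam * Real.pi * Real.cos (1 / Real.sqrt lam)
              * Real.sin (Real.pi * t))) ∧
      (∀ t ∈ Set.Icc (0:ℝ) 1,
        e t = C * (Real.sin (t / Real.sqrt lam)
          - 2 * Real.sin (1 / Real.sqrt lam)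
              / (lam * Real.pi * (Real.pi ^ 2 - 1 / lam)) * Real.sin (Real.pi * t))) :=
  stmt7_general lam hlam e he_cont heig
end

section
/- The integral operator A_R has infinitely many positive eigenvalues: the set of real numbers λ > 0 for which there exists a continuous function e : [0,1] → ℝ, not identically zero, with ∫₀¹ R(t,s) e(s) ds = λ e(t) for all t ∈ [0,1], is infinite. -/
/-!
For `ω > 0`, the functions `e = A sin (ω t) + B (ω ∫₀ᵗ sin (ω (t - s)) g s ds - g t)` satisfy
`e 0 = 0` and `e'' + ω² e = -B g''`. Since `min t s` is the Green function of `-u''` with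
`u 0 = 0`, `u' 1 = 0`, such an `e` is an eigenfunction with eigenvalue `ω⁻²` as soon as
`(A, B)` lies in the kernel of a `2 × 2` matrix depending continuously on `ω` (one row for the
boundary condition at `1`, one for `∫ g e = B / ω²`). Where `cos ω = 0` its determinant is
`-ω sin ω (∫₀¹ sin (ω s) g s ds)²`, so it changes sign on every interval
`[π/2 + 2kπ, 3π/2 + 2kπ]`, and the intermediate value theorem yields one eigenvalue for each `k`.
The values of `g` outside `[0, 1]` are irrelevant, so `g` may be replaced by a continuous extension.
-/

open Real Set intervalIntegral
open MeasureTheory (volume)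

theorem integral_eq_sub_of_hasDerivWithinAt_Icc {f f' : ℝ → ℝ} {a b : ℝ} (hab : a ≤ b)
    (hf : ∀ x ∈ Icc a b, HasDerivWithinAt f (f' x) (Icc a b) x)
    (hf' : IntervalIntegrable f' volume a b) :
    ∫ x in a..b, f' x = f b - f a :=
  integral_eq_sub_of_hasDerivAt_of_le hab (fun x hx ↦ (hf x hx).continuousWithinAt)
    (fun x hx ↦ (hf x (Ioo_subset_Icc_self hx)).hasDerivAt (Icc_mem_nhds hx.1 hx.2)) hf'

theorem integral_min_mul_eq_of_hasDerivWithinAt {e u u' : ℝ → ℝ} {L : ℝ} (he : Continuous e)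
    (hu : ∀ t ∈ Icc 0 L, HasDerivWithinAt u (u' t) (Icc 0 L) t)
    (hu' : ∀ t ∈ Icc 0 L, HasDerivWithinAt u' (-e t) (Icc 0 L) t)
    (hu0 : u 0 = 0) (hu'L : u' L = 0) {t : ℝ} (ht : t ∈ Icc 0 L) :
    ∫ s in 0..L, min t s * e s = u t := by
  have hsub₁ : Icc 0 t ⊆ Icc 0 L := Icc_subset_Icc_right ht.2
  have hsub₂ : Icc t L ⊆ Icc 0 L := Icc_subset_Icc_left ht.1
  have hint : ∀ a b, IntervalIntegrable (fun s ↦ min t s * e s) volume a b := fun a b ↦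
    ((continuous_const.min continuous_id).mul he).intervalIntegrable a b
  have hleft : ∫ s in 0..t, s * e s = u t - t * u' t := by
    have hparts := integral_mul_deriv_eq_deriv_mul_of_hasDerivWithinAt (a := 0) (b := t)
      (u := id) (u' := fun _ ↦ 1) (v := u') (v' := fun s ↦ -e s)
      (fun x _ ↦ hasDerivWithinAt_id x _)
      (fun x hx ↦ (hu' x (hsub₁ (uIcc_of_le ht.1 ▸ hx))).mono (uIcc_of_le ht.1 ▸ hsub₁))
      intervalIntegrable_const (he.neg.intervalIntegrable _ _)
    have hftc := integral_eq_sub_of_hasDerivWithinAt_Icc ht.1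
      (fun x hx ↦ (hu x (hsub₁ hx)).mono hsub₁)
      (ContinuousOn.intervalIntegrable_of_Icc ht.1
        fun x hx ↦ ((hu' x (hsub₁ hx)).continuousWithinAt).mono hsub₁)
    simp only [id, one_mul, zero_mul, sub_zero, mul_neg, integral_neg] at hparts
    rw [hftc, hu0] at hparts
    linarith
  have hright : ∫ s in t..L, e s = u' t := by
    have := integral_eq_sub_of_hasDerivWithinAt_Icc ht.2
      (fun x hx ↦ (hu' x (hsub₂ hx)).mono hsub₂) (he.neg.intervalIntegrable _ _)
    rw [integral_neg, hu'L] at this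
    linarith
  calc ∫ s in 0..L, min t s * e s
      = (∫ s in 0..t, min t s * e s) + ∫ s in t..L, min t s * e s :=
        (integral_add_adjacent_intervals (hint 0 t) (hint t L)).symm
    _ = (∫ s in 0..t, s * e s) + ∫ s in t..L, t * e s := by
        congr 1 <;> refine integral_congr fun s hs ↦ ?_
        · rw [uIcc_of_le ht.1] at hs
          simp only [min_eq_right hs.2]
        · rw [uIcc_of_le ht.2] at hs
          simp only [min_eq_left hs.1]
    _ = u t := by rw [integral_const_mul, hleft, hright]; ring

section Duhamel

variable (G : ℝ → ℝ)

/-- `∫₀ᵗ sin (ω (t - s)) G s ds`, with the sine of the difference expanded. -/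
noncomputable def duhamelSin (ω t : ℝ) : ℝ :=
  sin (ω * t) * (∫ s in 0..t, cos (ω * s) * G s) - cos (ω * t) * ∫ s in 0..t, sin (ω * s) * G s

/-- `∫₀ᵗ cos (ω (t - s)) G s ds`, with the cosine of the difference expanded. -/
noncomputable def duhamelCos (ω t : ℝ) : ℝ :=
  cos (ω * t) * (∫ s in 0..t, cos (ω * s) * G s) + sin (ω * t) * ∫ s in 0..t, sin (ω * s) * G s

variable {G}

theorem duhamelSin_zero_right (ω : ℝ) : duhamelSin G ω 0 = 0 := by
  simp [duhamelSin]

theorem continuous_uncurry_duhamelSin (hG : Continuous G) :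
    Continuous (Function.uncurry (duhamelSin G)) := by
  have hC := continuous_parametric_primitive_of_continuous (μ := volume) (a₀ := 0)
    (f := fun ω s ↦ cos (ω * s) * G s) (by fun_prop)
  have hS := continuous_parametric_primitive_of_continuous (μ := volume) (a₀ := 0)
    (f := fun ω s ↦ sin (ω * s) * G s) (by fun_prop)
  unfold duhamelSin
  exact ((continuous_sin.comp (continuous_fst.mul continuous_snd)).mul hC).sub
    ((continuous_cos.comp (continuous_fst.mul continuous_snd)).mul hS)

theorem continuous_uncurry_duhamelCos (hG : Continuous G) :
    Continuous (Function.uncurry (duhamelCos G)) := by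
  have hC := continuous_parametric_primitive_of_continuous (μ := volume) (a₀ := 0)
    (f := fun ω s ↦ cos (ω * s) * G s) (by fun_prop)
  have hS := continuous_parametric_primitive_of_continuous (μ := volume) (a₀ := 0)
    (f := fun ω s ↦ sin (ω * s) * G s) (by fun_prop)
  unfold duhamelCos
  exact ((continuous_cos.comp (continuous_fst.mul continuous_snd)).mul hC).add
    ((continuous_sin.comp (continuous_fst.mul continuous_snd)).mul hS)

theorem continuous_duhamelSin (hG : Continuous G) (ω : ℝ) : Continuous (duhamelSin G ω) :=
  (continuous_uncurry_duhamelSin hG).uncurry_left ω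

theorem hasDerivAt_duhamelSin (hG : Continuous G) (ω t : ℝ) :
    HasDerivAt (duhamelSin G ω) (ω * duhamelCos G ω t) t := by
  have hC : HasDerivAt (fun t ↦ ∫ s in 0..t, cos (ω * s) * G s) (cos (ω * t) * G t) t :=
    (by fun_prop : Continuous fun s ↦ cos (ω * s) * G s).integral_hasStrictDerivAt 0 t |>.hasDerivAt
  have hS : HasDerivAt (fun t ↦ ∫ s in 0..t, sin (ω * s) * G s) (sin (ω * t) * G t) t :=
    (by fun_prop : Continuous fun s ↦ sin (ω * s) * G s).integral_hasStrictDerivAt 0 t |>.hasDerivAt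
  have hωt : HasDerivAt (ω * ·) ω t := by simpa using (hasDerivAt_id t).const_mul ω
  refine ((hωt.sin.mul hC).sub (hωt.cos.mul hS)).congr_deriv ?_
  simp only [duhamelCos]
  ring

theorem hasDerivAt_duhamelCos (hG : Continuous G) (ω t : ℝ) :
    HasDerivAt (duhamelCos G ω) (G t - ω * duhamelSin G ω t) t := by
  have hC : HasDerivAt (fun t ↦ ∫ s in 0..t, cos (ω * s) * G s) (cos (ω * t) * G t) t :=
    (by fun_prop : Continuous fun s ↦ cos (ω * s) * G s).integral_hasStrictDerivAt 0 t |>.hasDerivAt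
  have hS : HasDerivAt (fun t ↦ ∫ s in 0..t, sin (ω * s) * G s) (sin (ω * t) * G t) t :=
    (by fun_prop : Continuous fun s ↦ sin (ω * s) * G s).integral_hasStrictDerivAt 0 t |>.hasDerivAt
  have hωt : HasDerivAt (ω * ·) ω t := by simpa using (hasDerivAt_id t).const_mul ω
  refine ((hωt.cos.mul hC).add (hωt.sin.mul hS)).congr_deriv ?_
  simp only [duhamelSin]
  linear_combination G t * sin_sq_add_cos_sq (ω * t)

end Duhamel

section Ansatz

variable {G : ℝ → ℝ} {ω : ℝ}

variable (G) in
noncomputable def eigenAnsatz (ω A B t : ℝ) : ℝ :=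
  A * sin (ω * t) + B * (ω * duhamelSin G ω t - G t)

theorem continuous_eigenAnsatz (hG : Continuous G) (ω A B : ℝ) :
    Continuous (eigenAnsatz G ω A B) :=
  continuous_const.mul (continuous_sin.comp (continuous_const_mul ω)) |>.add <|
    continuous_const.mul <| (continuous_const.mul (continuous_duhamelSin hG ω)).sub hG

theorem hasDerivWithinAt_eigenAnsatz (hG : Continuous G) {s : Set ℝ} {t d : ℝ}
    (hGd : HasDerivWithinAt G d s t) (A B : ℝ) :
    HasDerivWithinAt (eigenAnsatz G ω A B)
      (A * ω * cos (ω * t) + B * (ω ^ 2 * duhamelCos G ω t - d)) s t := by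
  have hωt : HasDerivAt (ω * ·) ω t := by simpa using (hasDerivAt_id t).const_mul ω
  refine (((hωt.sin.const_mul A).hasDerivWithinAt.add
    ((((hasDerivAt_duhamelSin hG ω t).const_mul ω).hasDerivWithinAt.sub hGd).const_mul
      B))).congr_deriv ?_
  ring

theorem hasDerivWithinAt_deriv_eigenAnsatz (hG : Continuous G) {g' : ℝ → ℝ} {s : Set ℝ}
    {t d : ℝ} (hg'd : HasDerivWithinAt g' d s t) (A B : ℝ) :
    HasDerivWithinAt (fun t ↦ A * ω * cos (ω * t) + B * (ω ^ 2 * duhamelCos G ω t - g' t))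
      (-(ω ^ 2 * eigenAnsatz G ω A B t) - B * d) s t := by
  have hωt : HasDerivAt (ω * ·) ω t := by simpa using (hasDerivAt_id t).const_mul ω
  refine (((hωt.cos.const_mul (A * ω)).hasDerivWithinAt.add
    ((((hasDerivAt_duhamelCos hG ω t).const_mul (ω ^ 2)).hasDerivWithinAt.sub hg'd).const_mul
      B))).congr_deriv ?_
  simp only [eigenAnsatz]
  ring

theorem integral_kernel_mul_eigenAnsatz {g' g'' : ℝ → ℝ} {A B : ℝ} (hG : Continuous G)
    (hg1 : ∀ t ∈ Icc (0:ℝ) 1, HasDerivWithinAt G (g' t) (Icc 0 1) t)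
    (hg2 : ∀ t ∈ Icc (0:ℝ) 1, HasDerivWithinAt g' (g'' t) (Icc 0 1) t)
    (hG0 : G 0 = 0) (hω : ω ≠ 0) (hbc : A * cos ω + B * (ω * duhamelCos G ω 1) = 0)
    (hint : ∫ s in (0:ℝ)..1, G s * eigenAnsatz G ω A B s = B / ω ^ 2)
    {t : ℝ} (ht : t ∈ Icc (0:ℝ) 1) :
    ∫ s in (0:ℝ)..1, (min t s - G t * G s) * eigenAnsatz G ω A B s
      = (ω ^ 2)⁻¹ * eigenAnsatz G ω A B t := by
  set e := eigenAnsatz G ω A B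
  have he : Continuous e := continuous_eigenAnsatz hG ω A B
  -- `u = λ e + (∫ G e) G` solves `-u'' = e`, `u 0 = 0`, `u' 1 = 0` with `λ = ω⁻²`.
  have hgreen := integral_min_mul_eq_of_hasDerivWithinAt he
    (u := fun t ↦ (ω ^ 2)⁻¹ * e t + B / ω ^ 2 * G t)
    (u' := fun t ↦ (ω ^ 2)⁻¹ * (A * ω * cos (ω * t) + B * (ω ^ 2 * duhamelCos G ω t - g' t))
      + B / ω ^ 2 * g' t)
    (fun t ht ↦ ((hasDerivWithinAt_eigenAnsatz hG (hg1 t ht) A B).const_mul _).add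
      ((hg1 t ht).const_mul _))
    (fun t ht ↦ (((hasDerivWithinAt_deriv_eigenAnsatz hG (hg2 t ht) A B).const_mul _).add
      ((hg2 t ht).const_mul _)).congr_deriv (by field_simp; ring))
    (by simp [e, eigenAnsatz, duhamelSin_zero_right, hG0])
    (by field_simp; linear_combination ω * hbc) ht
  have hsplit : ∫ s in (0:ℝ)..1, (min t s - G t * G s) * e s
      = (∫ s in (0:ℝ)..1, min t s * e s) - G t * ∫ s in (0:ℝ)..1, G s * e s := by
    rw [← integral_const_mul, ← integral_sub]
    · exact integral_congr fun s _ ↦ by ring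
    · exact ((continuous_const.min continuous_id).mul he).intervalIntegrable _ _
    · exact (continuous_const.mul (hG.mul he)).intervalIntegrable _ _
  rw [hsplit, hgreen, hint]
  ring

theorem integral_mul_eigenAnsatz (hG : Continuous G) (A B : ℝ) :
    ∫ s in (0:ℝ)..1, G s * eigenAnsatz G ω A B s
      = A * (∫ s in (0:ℝ)..1, sin (ω * s) * G s)
        + B * ∫ s in (0:ℝ)..1, G s * (ω * duhamelSin G ω s - G s) := by
  have hsin : Continuous fun s ↦ sin (ω * s) * G s := by fun_prop
  have hS : Continuous fun s ↦ G s * (ω * duhamelSin G ω s - G s) :=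
    hG.mul ((continuous_const.mul (continuous_duhamelSin hG ω)).sub hG)
  rw [← integral_const_mul, ← integral_const_mul, ← integral_add]
  · exact integral_congr fun s _ ↦ by simp only [eigenAnsatz]; ring
  · exact (continuous_const.mul hsin).intervalIntegrable _ _
  · exact (continuous_const.mul hS).intervalIntegrable _ _

variable (G) in
/-- The first row encodes the boundary condition at `t = 1`, the second `∫ G e = B / ω²`,
for `e = eigenAnsatz G ω A B`. -/
noncomputable def boundaryMatrix (ω : ℝ) : Matrix (Fin 2) (Fin 2) ℝ :=
  !![cos ω, ω * duhamelCos G ω 1;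
    ∫ s in (0:ℝ)..1, sin (ω * s) * G s,
      (∫ s in (0:ℝ)..1, G s * (ω * duhamelSin G ω s - G s)) - (ω ^ 2)⁻¹]

theorem det_boundaryMatrix_of_cos_eq_zero (h : cos ω = 0) :
    (boundaryMatrix G ω).det = -(ω * sin ω * (∫ s in (0:ℝ)..1, sin (ω * s) * G s) ^ 2) := by
  simp only [boundaryMatrix, Matrix.det_fin_two_of, duhamelCos, h, mul_one]
  ring

theorem continuousOn_det_boundaryMatrix (hG : Continuous G) :
    ContinuousOn (fun ω ↦ (boundaryMatrix G ω).det) (Ioi 0) := by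
  have hS := continuous_uncurry_duhamelSin hG
  have hC := continuous_uncurry_duhamelCos hG
  have hsinG : Continuous fun ω ↦ ∫ s in (0:ℝ)..1, sin (ω * s) * G s :=
    continuous_parametric_intervalIntegral_of_continuous' (by fun_prop) 0 1
  have hGS : Continuous fun ω ↦ ∫ s in (0:ℝ)..1, G s * (ω * duhamelSin G ω s - G s) :=
    continuous_parametric_intervalIntegral_of_continuous'
      (f := fun ω s ↦ G s * (ω * duhamelSin G ω s - G s))
      ((hG.comp continuous_snd).mul ((continuous_fst.mul hS).sub (hG.comp continuous_snd))) 0 1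
  simp only [boundaryMatrix, Matrix.det_fin_two_of]
  refine ContinuousOn.sub ?_ ((continuous_id.mul (hC.uncurry_right 1)).mul hsinG).continuousOn
  refine continuous_cos.continuousOn.mul (hGS.continuousOn.sub ?_)
  exact ((continuous_pow 2).continuousOn.inv₀ fun ω hω ↦ pow_ne_zero 2 (ne_of_gt hω))

theorem exists_det_boundaryMatrix_eq_zero (hG : Continuous G) (k : ℕ) :
    ∃ ω ∈ Icc (π / 2 + k * (2 * π)) (π / 2 + k * (2 * π) + π), (boundaryMatrix G ω).det = 0 := by
  set a := π / 2 + k * (2 * π)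
  have ha : 0 < a := by positivity
  have hcos : cos a = 0 := by simp [a, cos_add_nat_mul_two_pi]
  have hsin : sin a = 1 := by simp [a, sin_add_nat_mul_two_pi]
  have hcont := (continuousOn_det_boundaryMatrix hG).mono fun ω (hω : ω ∈ Icc a (a + π)) ↦
    mem_Ioi.2 (ha.trans_le hω.1)
  refine intermediate_value_Icc (by linarith [pi_pos]) hcont ⟨?_, ?_⟩
  · rw [det_boundaryMatrix_of_cos_eq_zero hcos, hsin]
    nlinarith [sq_nonneg (∫ s in (0:ℝ)..1, sin (a * s) * G s)]
  · rw [det_boundaryMatrix_of_cos_eq_zero (by rw [cos_add_pi, hcos, neg_zero]), sin_add_pi, hsin]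
    nlinarith [sq_nonneg (∫ s in (0:ℝ)..1, sin ((a + π) * s) * G s), pi_pos]

theorem exists_ne_zero_eigenAnsatz {A B : ℝ} (hω : π / 2 ≤ ω) (hAB : ¬(A = 0 ∧ B = 0))
    (hint : ∫ s in (0:ℝ)..1, G s * eigenAnsatz G ω A B s = B / ω ^ 2) :
    ∃ t ∈ Icc (0:ℝ) 1, eigenAnsatz G ω A B t ≠ 0 := by
  by_contra! hzero
  have hω0 : 0 < ω := by linarith [pi_pos]
  have hB : B = 0 := by
    have h0 : ∫ s in (0:ℝ)..1, G s * eigenAnsatz G ω A B s = 0 := by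
      rw [integral_congr (g := fun _ ↦ 0) fun s hs ↦ by
        rw [uIcc_of_le zero_le_one] at hs
        simp [hzero s hs]]
      simp
    simpa [hω0.ne'] using hint.symm.trans h0
  have hA : A = eigenAnsatz G ω A B (π / (2 * ω)) := by
    simp [eigenAnsatz, hB, show ω * (π / (2 * ω)) = π / 2 by field_simp]
  exact hAB ⟨hA.trans (hzero _ ⟨by positivity, (div_le_one (by positivity)).2 (by linarith)⟩), hB⟩

end Ansatz

def positiveEigenvalues (g : ℝ → ℝ) : Set ℝ :=
  {lam : ℝ | 0 < lam ∧ ∃ e : ℝ → ℝ, ContinuousOn e (Icc 0 1) ∧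
    (∃ t ∈ Icc (0:ℝ) 1, e t ≠ 0) ∧
    ∀ t ∈ Icc (0:ℝ) 1,
      (∫ s in (0:ℝ)..1, (min t s - g t * g s) * e s) = lam * e t}

theorem positiveEigenvalues_subset_of_eqOn {g G : ℝ → ℝ} (h : EqOn g G (Icc 0 1)) :
    positiveEigenvalues g ⊆ positiveEigenvalues G := by
  rintro lam ⟨hlam, e, he, hne, heig⟩
  refine ⟨hlam, e, he, hne, fun t ht ↦ ?_⟩
  rw [← heig t ht]
  refine integral_congr fun s hs ↦ ?_
  rw [uIcc_of_le zero_le_one] at hs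
  simp only [h ht, h hs]

theorem exists_sq_inv_mem_positiveEigenvalues {G g' g'' : ℝ → ℝ} (hG : Continuous G)
    (hg1 : ∀ t ∈ Icc (0:ℝ) 1, HasDerivWithinAt G (g' t) (Icc 0 1) t)
    (hg2 : ∀ t ∈ Icc (0:ℝ) 1, HasDerivWithinAt g' (g'' t) (Icc 0 1) t)
    (hG0 : G 0 = 0) (k : ℕ) :
    ∃ ω ∈ Icc (π / 2 + k * (2 * π)) (π / 2 + k * (2 * π) + π),
      (ω ^ 2)⁻¹ ∈ positiveEigenvalues G := by
  obtain ⟨ω, hωI, hdet⟩ := exists_det_boundaryMatrix_eq_zero hG k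
  have hω : π / 2 ≤ ω := le_trans (le_add_of_nonneg_right (by positivity)) hωI.1
  have hω0 : 0 < ω := by linarith [pi_pos]
  obtain ⟨v, hv0, hv⟩ := Matrix.exists_mulVec_eq_zero_iff.2 hdet
  have hrow0 := congrFun hv 0
  have hrow1 := congrFun hv 1
  simp only [boundaryMatrix, Matrix.mulVec, Matrix.vec2_dotProduct, Matrix.of_apply,
    Matrix.cons_val_zero, Matrix.cons_val_one, Pi.zero_apply] at hrow0 hrow1
  have hint : ∫ s in (0:ℝ)..1, G s * eigenAnsatz G ω (v 0) (v 1) s = v 1 / ω ^ 2 := by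
    rw [integral_mul_eigenAnsatz hG]
    linear_combination hrow1
  refine ⟨ω, hωI, by positivity, eigenAnsatz G ω (v 0) (v 1),
    (continuous_eigenAnsatz hG _ _ _).continuousOn,
    exists_ne_zero_eigenAnsatz hω (fun h ↦ hv0 (funext fun i ↦ by fin_cases i <;> simp [h])) hint,
    fun t ht ↦ integral_kernel_mul_eigenAnsatz hG hg1 hg2 hG0 hω0.ne' (by linear_combination hrow0)
      hint ht⟩

theorem positiveEigenvalues_infinite {G g' g'' : ℝ → ℝ} (hG : Continuous G)
    (hg1 : ∀ t ∈ Icc (0:ℝ) 1, HasDerivWithinAt G (g' t) (Icc 0 1) t)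
    (hg2 : ∀ t ∈ Icc (0:ℝ) 1, HasDerivWithinAt g' (g'' t) (Icc 0 1) t)
    (hG0 : G 0 = 0) : (positiveEigenvalues G).Infinite := by
  refine Infinite.of_image (·⁻¹) (infinite_of_not_bddAbove ?_)
  rintro ⟨M, hM⟩
  obtain ⟨k, hk⟩ := exists_nat_ge M
  obtain ⟨ω, hωI, hmem⟩ := exists_sq_inv_mem_positiveEigenvalues hG hg1 hg2 hG0 k
  have hωM : ω ^ 2 ≤ M := by simpa using hM (mem_image_of_mem _ hmem)
  have hkω : (k:ℝ) + 1 ≤ ω := by nlinarith [pi_gt_three, hωI.1, k.cast_nonneg (α := ℝ)]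
  nlinarith [k.cast_nonneg (α := ℝ)]

theorem stmt19_general (g g' g'' : ℝ → ℝ)
    (hg1 : ∀ t ∈ Set.Icc (0:ℝ) 1, HasDerivWithinAt g (g' t) (Set.Icc 0 1) t)
    (hg2 : ∀ t ∈ Set.Icc (0:ℝ) 1, HasDerivWithinAt g' (g'' t) (Set.Icc 0 1) t)
    (hg0 : g 0 = 0) :
    {lam : ℝ | 0 < lam ∧ ∃ e : ℝ → ℝ, ContinuousOn e (Set.Icc 0 1) ∧
      (∃ t ∈ Set.Icc (0:ℝ) 1, e t ≠ 0) ∧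
      ∀ t ∈ Set.Icc (0:ℝ) 1,
        (∫ s in (0:ℝ)..1, (min t s - g t * g s) * e s) = lam * e t}.Infinite := by
  set G := IccExtend zero_le_one (domRestrict (Icc (0:ℝ) 1) g)
  have hGg : EqOn G g (Icc 0 1) := fun t ht ↦ IccExtend_of_mem _ _ ht
  have hG : Continuous G := (continuousOn_iff_continuous_domRestrict.1
    fun t ht ↦ (hg1 t ht).continuousWithinAt).Icc_extend'
  refine (positiveEigenvalues_infinite hG (fun t ht ↦ (hg1 t ht).congr hGg (hGg ht)) hg2
    (by rw [hGg ⟨le_rfl, zero_le_one⟩, hg0])).mono (positiveEigenvalues_subset_of_eqOn hGg)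

/-- The integral operator with kernel `R(s,t) = min(s,t) - g(s)g(t)` has infinitely many
positive eigenvalues. -/
theorem stmt19 (g g' g'' : ℝ → ℝ)
    (hg1 : ∀ t ∈ Set.Icc (0:ℝ) 1, HasDerivWithinAt g (g' t) (Set.Icc 0 1) t)
    (hg2 : ∀ t ∈ Set.Icc (0:ℝ) 1, HasDerivWithinAt g' (g'' t) (Set.Icc 0 1) t)
    (hg2c : ContinuousOn g'' (Set.Icc 0 1))
    (hg0 : g 0 = 0)
    (hgnorm : ∫ u in (0:ℝ)..1, (g' u) ^ 2 = 1) :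
    {lam : ℝ | 0 < lam ∧ ∃ e : ℝ → ℝ, ContinuousOn e (Set.Icc 0 1) ∧
      (∃ t ∈ Set.Icc (0:ℝ) 1, e t ≠ 0) ∧
      ∀ t ∈ Set.Icc (0:ℝ) 1,
        (∫ s in (0:ℝ)..1, (min t s - g t * g s) * e s) = lam * e t}.Infinite :=
  stmt19_general g g' g'' hg1 hg2 hg0
end
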